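/- arXiv:1709.06821 — 2 statements merged into one kernel-verified Lean document; each statement's English description precedes it below -/
import Mathlib

section
/- For a fixed elimination ordering P on a graph G, if G⁺ is obtained from G by adding one edge, then at every step i of the elimination process the elimination-neighborhood degree satisfies d(i, G, P) ≤ d(i, G⁺, P). -/
open Finset

/-- Node elimination of a single vertex `v`: remove `v` (it becomes isolated) and
complete its remaining neighborhood into a clique. -/
def elimVertex {V : Type*} (G : SimpleGraph V) (v : V) : SimpleGraph V where
  Adj a b := a ≠ b ∧ a ≠ v ∧ b ≠ v ∧ (G.Adj a b ∨ (G.Adj v a ∧ G.Adj v b))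
  symm := by
    constructor
    intro a b h
    exact ⟨h.1.symm, h.2.2.1, h.2.1,
      h.2.2.2.elim (fun x => Or.inl x.symm) (fun x => Or.inr ⟨x.2, x.1⟩)⟩
  loopless := by
    constructor
    intro a h
    exact h.1 rfl

/-- `elimGraph G P i` is the elimination graph after eliminating `P 0, …, P (i-1)`. -/
def elimGraph {V : Type*} (G : SimpleGraph V) (P : ℕ → V) : ℕ → SimpleGraph V
  | 0 => G
  | (i + 1) => elimVertex (elimGraph G P i) (P i)

/-- Elimination degree of the `i`-th eliminated vertex (0-indexed). -/
noncomputable def elimDeg {V : Type*} (G : SimpleGraph V) (P : ℕ → V) (i : ℕ) : ℕ :=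
  ((elimGraph G P i).neighborSet (P i)).ncard

/-- Scalar elimination complexity `C(G, P) = Σ_i d(i, G, P)²`. -/
noncomputable def elimComplexity {V : Type*} (G : SimpleGraph V) (P : ℕ → V) (n : ℕ) : ℕ :=
  ∑ i ∈ Finset.range n, (elimDeg G P i) ^ 2

lemma elimVertex_mono {V : Type*} {G H : SimpleGraph V} (h : G ≤ H) (v : V) :
    elimVertex G v ≤ elimVertex H v := fun _ _ hab =>
  ⟨hab.1, hab.2.1, hab.2.2.1, hab.2.2.2.imp (@h _ _) (And.imp (@h _ _) (@h _ _))⟩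

lemma elimGraph_mono {V : Type*} {G H : SimpleGraph V} (h : G ≤ H) (P : ℕ → V) (i : ℕ) :
    elimGraph G P i ≤ elimGraph H P i := by
  induction i with
  | zero => exact h
  | succ n ih => exact elimVertex_mono ih (P n)

lemma elimDeg_mono {V : Type*} [Finite V] {G H : SimpleGraph V} (h : G ≤ H) (P : ℕ → V)
    (i : ℕ) : elimDeg G P i ≤ elimDeg H P i :=
  Set.ncard_le_ncard (SimpleGraph.neighborSet_mono (elimGraph_mono h P i) (P i))

theorem stmt0_general {V : Type*} [Fintype V] (G : SimpleGraph V) (P : ℕ → V)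
    (u v : V) (Gp : SimpleGraph V)
    (hGp : Gp = G ⊔ SimpleGraph.fromEdgeSet {s(u, v)}) (i : ℕ) :
    elimDeg G P i ≤ elimDeg Gp P i := by
  subst hGp
  exact elimDeg_mono le_sup_left P i

/-- adding one edge cannot decrease any elimination degree,
for a fixed elimination ordering. -/
theorem stmt0 {V : Type*} [Fintype V] (G : SimpleGraph V) (P : ℕ → V)
    (u v : V) (huv : u ≠ v) (Gp : SimpleGraph V)
    (hGp : Gp = G ⊔ SimpleGraph.fromEdgeSet {s(u, v)}) (i : ℕ) :
    elimDeg G P i ≤ elimDeg Gp P i :=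
  stmt0_general G P u v Gp hGp i
end

section
/- Suppose in a graph G the vertex set is partitioned into blocks Π_0,…,Π_{r−1}, each of size k = n/r, such that for each i, every vertex of Π_i is adjacent only to vertices in Π_{i−1} ∪ Π_i ∪ Π_{i+1}. Then under any ordering that eliminates blocks Π_0, Π_1, … in sequence, the elimination degree of every vertex is at most 3k, and hence the elimination complexity is at most 9 n k² = 9 n³ / r². -/
open Finset

/-!
Eliminating a vertex `v` whose remaining neighbours all lie in its own block or a later one creates
fill edges only between vertices of blocks `β v` and `β v + 1`, so adjacency stays confined to
neighbouring blocks. In a block-sequential ordering every vertex is eliminated while all its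
remaining neighbours lie in its own block or the next one, hence it has at most `2k` of them.
-/

section

variable {V : Type*}

/-- Adjacent vertices lie in the same or in consecutive layers of `f`; by symmetry of `Adj` one
inequality suffices. -/
def SimpleGraph.IsLayered (G : SimpleGraph V) (f : V → ℕ) : Prop :=
  ∀ ⦃u w⦄, G.Adj u w → f u ≤ f w + 1

theorem support_elimVertex_subset (G : SimpleGraph V) (v : V) :
    (elimVertex G v).support ⊆ G.support \ {v} := by
  rintro a ⟨b, hab, hav, -, hadj | ⟨hva, -⟩⟩
  · exact ⟨⟨b, hadj⟩, hav⟩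
  · exact ⟨⟨v, hva.symm⟩, hav⟩

theorem notMem_support_elimGraph (G : SimpleGraph V) (P : ℕ → V) {i j : ℕ} (hj : j < i) :
    P j ∉ (elimGraph G P i).support := by
  induction i with
  | zero => omega
  | succ i ih =>
    intro hmem
    obtain ⟨hmem, hne⟩ := support_elimVertex_subset _ _ hmem
    rcases Nat.lt_succ_iff_lt_or_eq.mp hj with hj | rfl
    · exact ih hj hmem
    · exact hne rfl

theorem le_of_mem_support_elimGraph {α : Type*} [Preorder α] (G : SimpleGraph V) (P : ℕ → V)
    (f : V → α) {n : ℕ} (hsurj : ∀ v : V, ∃ i < n, P i = v)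
    (hmono : ∀ i j, i < j → j < n → f (P i) ≤ f (P j)) {i : ℕ} {w : V}
    (hw : w ∈ (elimGraph G P i).support) : f (P i) ≤ f w := by
  obtain ⟨j, hjn, rfl⟩ := hsurj w
  rcases lt_trichotomy i j with hij | rfl | hji
  · exact hmono i j hij hjn
  · exact le_rfl
  · exact absurd hw (notMem_support_elimGraph G P hji)

theorem SimpleGraph.IsLayered.elimVertex {G : SimpleGraph V} {f : V → ℕ} (hG : G.IsLayered f)
    {v : V} (hv : ∀ w, G.Adj v w → f v ≤ f w) : (elimVertex G v).IsLayered f := by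
  rintro a b ⟨-, -, -, hab | ⟨hva, hvb⟩⟩
  · exact hG hab
  · exact (hG hva.symm).trans (Nat.add_le_add_right (hv b hvb) 1)

theorem SimpleGraph.IsLayered.elimGraph {G : SimpleGraph V} {f : V → ℕ} (hG : G.IsLayered f)
    {P : ℕ → V} (hmin : ∀ i, ∀ w, (elimGraph G P i).Adj (P i) w → f (P i) ≤ f w) (i : ℕ) :
    (elimGraph G P i).IsLayered f := by
  induction i with
  | zero => exact hG
  | succ i ih => exact ih.elimVertex (hmin i)

theorem SimpleGraph.IsLayered.ncard_neighborSet_le [Finite V] {G : SimpleGraph V} {f : V → ℕ}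
    (hG : G.IsLayered f) {v : V} (hv : ∀ w, G.Adj v w → f v ≤ f w) :
    (G.neighborSet v).ncard ≤ {w | f w = f v}.ncard + {w | f w = f v + 1}.ncard := by
  have hsub : G.neighborSet v ⊆ {w | f w = f v} ∪ {w | f w = f v + 1} := by
    intro w hw
    have h₁ := hv w hw
    have h₂ := hG hw.symm
    simp only [Set.mem_union, Set.mem_ofPred_eq]
    omega
  exact (Set.ncard_le_ncard hsub (Set.toFinite _)).trans (Set.ncard_union_le _ _)

theorem ncard_fin_val_eq_le {r k : ℕ} (β : V → Fin r)
    (hblock : ∀ b : Fin r, {v | β v = b}.ncard = k) (m : ℕ) :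
    {v | (β v : ℕ) = m}.ncard ≤ k := by
  by_cases hm : m < r
  · simp only [← hblock ⟨m, hm⟩, Fin.ext_iff, le_refl]
  · have : {v | (β v : ℕ) = m} = ∅ :=
      Set.eq_empty_of_forall_notMem fun v hv => hm (hv ▸ (β v).isLt)
    simp [this]

theorem elimComplexity_le (G : SimpleGraph V) (P : ℕ → V) {n d : ℕ}
    (hdeg : ∀ i < n, elimDeg G P i ≤ d) : elimComplexity G P n ≤ n * d ^ 2 := by
  simpa [elimComplexity] using
    Finset.sum_le_card_nsmul (Finset.range n) (fun i => elimDeg G P i ^ 2) (d ^ 2) fun i hi =>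
      Nat.pow_le_pow_left (hdeg i (Finset.mem_range.mp hi)) 2

end

theorem stmt11_general {V : Type*} (G : SimpleGraph V) (r k n : ℕ)
    (β : V → Fin r)
    (hblock : ∀ b : Fin r, {v | β v = b}.ncard = k)
    (hadj : ∀ u v, G.Adj u v →
      (β u : ℕ) ≤ (β v : ℕ) + 1 ∧ (β v : ℕ) ≤ (β u : ℕ) + 1)
    (P : ℕ → V) (hsurj : ∀ v : V, ∃ i < n, P i = v)
    (hmono : ∀ i j, i < j → j < n → (β (P i) : ℕ) ≤ (β (P j) : ℕ)) :
    (∀ i < n, elimDeg G P i ≤ 3 * k) ∧ elimComplexity G P n ≤ 9 * n * k ^ 2 := by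
  have : Finite V := Finite.of_surjective (fun i : Fin n => P i) fun v => by
    obtain ⟨i, hi, rfl⟩ := hsurj v
    exact ⟨⟨i, hi⟩, rfl⟩
  let f : V → ℕ := fun v => β v
  have hmin : ∀ i, ∀ w, (elimGraph G P i).Adj (P i) w → f (P i) ≤ f w := fun i w hw =>
    le_of_mem_support_elimGraph G P f hsurj hmono ⟨P i, hw.symm⟩
  have hdeg : ∀ i < n, elimDeg G P i ≤ 3 * k := fun i _ =>
    calc elimDeg G P i ≤ {w | f w = f (P i)}.ncard + {w | f w = f (P i) + 1}.ncard :=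
          ((SimpleGraph.IsLayered.elimGraph (fun u w h => (hadj u w h).1) hmin i)
            |>.ncard_neighborSet_le (hmin i))
      _ ≤ k + k := add_le_add (ncard_fin_val_eq_le β hblock _) (ncard_fin_val_eq_le β hblock _)
      _ ≤ 3 * k := by omega
  exact ⟨hdeg, (elimComplexity_le G P hdeg).trans_eq (by ring)⟩

/-- if the vertices are partitioned into `r` blocks of size `k = n/r`
with adjacency confined to neighboring blocks, then under any block-sequential
elimination ordering every elimination degree is at most `3k`, hence the
elimination complexity is at most `9nk²`. -/
theorem stmt11 {V : Type*} [Fintype V] (G : SimpleGraph V) (r k n : ℕ)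
    (β : V → Fin r)
    (hn : n = Fintype.card V) (hnrk : n = r * k)
    (hblock : ∀ b : Fin r, {v | β v = b}.ncard = k)
    (hadj : ∀ u v, G.Adj u v →
      (β u : ℕ) ≤ (β v : ℕ) + 1 ∧ (β v : ℕ) ≤ (β u : ℕ) + 1)
    (P : ℕ → V) (hinj : Set.InjOn P (Set.Iio n)) (hsurj : ∀ v : V, ∃ i < n, P i = v)
    (hmono : ∀ i j, i < j → j < n → (β (P i) : ℕ) ≤ (β (P j) : ℕ)) :
    (∀ i < n, elimDeg G P i ≤ 3 * k) ∧ elimComplexity G P n ≤ 9 * n * k ^ 2 :=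
  stmt11_general G r k n β hblock hadj P hsurj hmono
end
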